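/- Let Z be a measurable space and let μ0S, μ1S, μ0T, μ1T be probability measures on Z, where μyU is the distribution of the feature Z given class label y in domain U (source S or target T). Define, for a measurable classifier g : Z → {0,1} and balanced class priors, the error εU(g) = (1/2)·μ0U({z : g z = 1}) + (1/2)·μ1U({z : g z = 0}). If the class-0 feature distribution in the target equals the class-1 feature distribution in the source, i.e. μ0T = μ1S, then for every measurable g : Z → {0,1}, εS(g) + εT(g) ≥ 1/2. -/
import Mathlib

open MeasureTheory

/-- If the class-0 feature distribution in the target domain coincides with the
class-1 feature distribution in the source domain, then under balanced class priors
the sum of the source and target classification errors of any measurable binary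
classifier is at least `1/2`. -/
theorem sum_of_errors_ge_half
    {Z : Type*} [MeasurableSpace Z]
    (μ0S μ1S μ0T μ1T : Measure Z)
    [IsProbabilityMeasure μ0S] [IsProbabilityMeasure μ1S]
    [IsProbabilityMeasure μ0T] [IsProbabilityMeasure μ1T]
    (hcollide : μ0T = μ1S)
    (g : Z → Bool) (hg : Measurable g) :
    ((1 / 2) * μ0S {z | g z = true} + (1 / 2) * μ1S {z | g z = false})
      + ((1 / 2) * μ0T {z | g z = true} + (1 / 2) * μ1T {z | g z = false})
      ≥ 1 / 2 := by
  rw [hcollide]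
  have hmeas : MeasurableSet {z | g z = true} := hg (measurableSet_singleton true)
  have hcompl : {z | g z = false} = {z | g z = true}ᶜ := by
    ext z; simp [Bool.not_eq_true]
  have hsum : μ1S {z | g z = false} + μ1S {z | g z = true} = 1 := by
    rw [hcompl, add_comm, ← measure_univ (μ := μ1S), ← Set.union_compl_self {z | g z = true},
      measure_union (disjoint_compl_right) hmeas.compl]
  calc ((1 / 2) * μ0S {z | g z = true} + (1 / 2) * μ1S {z | g z = false})
      + ((1 / 2) * μ1S {z | g z = true} + (1 / 2) * μ1T {z | g z = false})
      ≥ (1 / 2) * μ1S {z | g z = false} + (1 / 2) * μ1S {z | g z = true} := by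
        have h1 : 1 / 2 * μ1S {z | g z = false} ≤
            1 / 2 * μ0S {z | g z = true} + 1 / 2 * μ1S {z | g z = false} := le_add_self
        have h2 : 1 / 2 * μ1S {z | g z = true} ≤
            1 / 2 * μ1S {z | g z = true} + 1 / 2 * μ1T {z | g z = false} := le_self_add
        exact add_le_add h1 h2
    _ = 1 / 2 := by rw [← mul_add, hsum, mul_one]
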